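/- Let O_1, …, O_v be scoring octal (taking) games and suppose for each i the single-heap scoring Grundy value satisfies G_s(n) ≥ 0 for all heaps n ∈ O_i with n ≤ N_i. Then for any heaps n_i ∈ O_i with n_i ≤ N_i the selective-sum scoring Grundy value is additive: G_s(n_1 ▽ … ▽ n_v) = Σ_{i=1}^v G_s(n_i). -/

import Mathlib

/-- A scoring octal rule set: `t k` is the octal digit governing removals of `k` beans
(its bit `i` is set iff one may leave `i` heaps), and `p k` is the number of points the
mover scores for removing `k` beans. -/
structure Octal where
  t : ℕ → ℕ
  p : ℕ → ℝ

/-- A legal move in the octal game `O` on a heap of size `n`: remove `k ≥ 1` beans and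
leave the heaps `ns`, where bit `ns.length` of `t k` is set. -/
def Octal.HeapMove (O : Octal) (n k : ℕ) (ns : List ℕ) : Prop :=
  1 ≤ k ∧ k ≤ n ∧ ns.sum + k = n ∧ (O.t k).testBit ns.length

/-- A move in a conjunctive sum of octal heaps: the mover moves on *every* heap,
`pts` is the total number of points scored, and the third argument is the
resulting position. -/
inductive ConjMove : List (Octal × ℕ) → ℝ → List (Octal × ℕ) → Prop where
  | single {O : Octal} {n k : ℕ} {ns : List ℕ} :
      O.HeapMove n k ns → ConjMove [(O, n)] (O.p k) (ns.map fun m => (O, m))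
  | cons {O : Octal} {n k : ℕ} {ns : List ℕ} {hs : List (Octal × ℕ)} {pts : ℝ}
      {hs' : List (Octal × ℕ)} :
      O.HeapMove n k ns → ConjMove hs pts hs' →
      ConjMove ((O, n) :: hs) (O.p k + pts) ((ns.map fun m => (O, m)) ++ hs')

/-- A "sub-move" in a selective sum of octal heaps: the mover moves on each heap or
skips it; the `Bool` flag records whether at least one heap was moved on. -/
inductive SubMove : List (Octal × ℕ) → ℝ → List (Octal × ℕ) → Bool → Prop where
  | nil : SubMove [] 0 [] false
  | skip {O : Octal} {n : ℕ} {hs : List (Octal × ℕ)} {pts : ℝ}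
      {hs' : List (Octal × ℕ)} {b : Bool} :
      SubMove hs pts hs' b → SubMove ((O, n) :: hs) pts ((O, n) :: hs') b
  | move {O : Octal} {n k : ℕ} {ns : List ℕ} {hs : List (Octal × ℕ)} {pts : ℝ}
      {hs' : List (Octal × ℕ)} {b : Bool} :
      O.HeapMove n k ns → SubMove hs pts hs' b →
      SubMove ((O, n) :: hs) (O.p k + pts) ((ns.map fun m => (O, m)) ++ hs') true

/-- A move in a selective sum: move on at least one heap, and on any subset of the rest. -/
def SelMove (hs : List (Octal × ℕ)) (pts : ℝ) (hs' : List (Octal × ℕ)) : Prop :=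
  SubMove hs pts hs' true

/-!
Write `Σ` for the sum of the single-heap values of a position. By strong induction on the number
of beans, `G_s = Σ` on every position whose heaps, and all smaller heaps of the same games, have
nonnegative value. In a selective move a heap that is moved on contributes `p_k - Σ(result)`,
which by the single-heap recursion and induction is at most its own value, while a skipped heap
contributes `-G_s(n) ≤ G_s(n)`: this is where nonnegativity enters. Conversely, moving optimally
on every heap that admits a move and skipping the dead heaps, whose value is `0`, attains `Σ`.
-/

def Octal.CanMove (O : Octal) (n : ℕ) : Prop :=
  ∃ k ns, O.HeapMove n k ns

theorem Octal.HeapMove.sum_lt {O : Octal} {n k : ℕ} {ns : List ℕ} (hm : O.HeapMove n k ns) :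
    ns.sum < n := by
  obtain ⟨hk, -, hsum, -⟩ := hm
  omega

theorem Octal.HeapMove.le_of_mem {O : Octal} {n k m : ℕ} {ns : List ℕ}
    (hm : O.HeapMove n k ns) (h : m ∈ ns) : m ≤ n :=
  (List.le_sum_of_mem h).trans hm.sum_lt.le

def beans (hs : List (Octal × ℕ)) : ℕ :=
  (hs.map Prod.snd).sum

@[simp] theorem beans_cons (q : Octal × ℕ) (hs : List (Octal × ℕ)) :
    beans (q :: hs) = q.2 + beans hs := by
  simp [beans]

@[simp] theorem beans_append (hs hs' : List (Octal × ℕ)) :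
    beans (hs ++ hs') = beans hs + beans hs' := by
  simp [beans]

@[simp] theorem beans_map_mk (O : Octal) (ns : List ℕ) : beans (ns.map (O, ·)) = ns.sum := by
  simp [beans, Function.comp_def]

theorem le_beans_of_mem {O : Octal} {n : ℕ} {hs : List (Octal × ℕ)} (h : (O, n) ∈ hs) :
    n ≤ beans hs :=
  List.le_sum_of_mem (List.mem_map_of_mem (f := Prod.snd) h)

namespace SubMove

variable {hs hs' : List (Octal × ℕ)} {pts : ℝ} {b : Bool}

theorem skip_all : ∀ hs : List (Octal × ℕ), SubMove hs 0 hs false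
  | [] => nil
  | (_, _) :: hs => skip (skip_all hs)

theorem beans_add_toNat_le (h : SubMove hs pts hs' b) : beans hs' + b.toNat ≤ beans hs := by
  induction h with
  | nil => simp
  | skip _ ih => simp only [beans_cons]; omega
  | @move _ _ _ ns _ _ _ b hm _ ih =>
    have := hm.sum_lt
    have := b.toNat_le
    simp only [beans_append, beans_map_mk, beans_cons, Bool.toNat_true]
    omega

theorem exists_canMove (h : SubMove hs pts hs' true) : ∃ q ∈ hs, q.1.CanMove q.2 := by
  generalize hb : true = b at h
  induction h with
  | nil => cases hb
  | skip _ ih =>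
    obtain ⟨q, hq, hmove⟩ := ih hb
    exact ⟨q, List.mem_cons_of_mem _ hq, hmove⟩
  | move hm _ _ => exact ⟨_, List.mem_cons_self, _, _, hm⟩

end SubMove

theorem SelMove.beans_lt {hs hs' : List (Octal × ℕ)} {pts : ℝ} (h : SelMove hs pts hs') :
    beans hs' < beans hs := by
  simpa using SubMove.beans_add_toNat_le h

theorem exists_selMove_iff {hs : List (Octal × ℕ)} :
    (∃ pts hs', SelMove hs pts hs') ↔ ∃ q ∈ hs, q.1.CanMove q.2 := by
  refine ⟨fun ⟨_, _, h⟩ => SubMove.exists_canMove h, ?_⟩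
  rintro ⟨q, hq, hmove⟩
  induction hs with
  | nil => cases hq
  | cons r hs ih =>
    obtain ⟨k, ns, hm⟩ := hmove
    rcases List.mem_cons.mp hq with rfl | hq
    · exact ⟨_, _, SubMove.move hm (SubMove.skip_all hs)⟩
    · obtain ⟨pts, hs', h⟩ := ih hq
      exact ⟨pts, r :: hs', SubMove.skip h⟩

theorem selMove_singleton_iff {O : Octal} {n : ℕ} {pts : ℝ} {hs' : List (Octal × ℕ)} :
    SelMove [(O, n)] pts hs' ↔
      ∃ k ns, O.HeapMove n k ns ∧ pts = O.p k ∧ hs' = ns.map (O, ·) := by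
  constructor
  · intro h
    cases h with
    | skip h => cases h
    | move hm h =>
      cases h
      exact ⟨_, _, hm, add_zero _, List.append_nil _⟩
  · rintro ⟨k, ns, hm, rfl, rfl⟩
    have h := SubMove.move hm SubMove.nil (O := O)
    rwa [add_zero, List.append_nil] at h

section Values

variable {Gs : List (Octal × ℕ) → ℝ}

def heapSum (Gs : List (Octal × ℕ) → ℝ) (hs : List (Octal × ℕ)) : ℝ :=
  (hs.map fun q => Gs [q]).sum

@[simp] theorem heapSum_nil : heapSum Gs [] = 0 := rfl

@[simp] theorem heapSum_cons (q : Octal × ℕ) (hs : List (Octal × ℕ)) :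
    heapSum Gs (q :: hs) = Gs [q] + heapSum Gs hs := by
  simp [heapSum]

@[simp] theorem heapSum_append (hs hs' : List (Octal × ℕ)) :
    heapSum Gs (hs ++ hs') = heapSum Gs hs + heapSum Gs hs' := by
  simp [heapSum]

def NonnegBelow (Gs : List (Octal × ℕ) → ℝ) (hs : List (Octal × ℕ)) : Prop :=
  ∀ O n, (O, n) ∈ hs → ∀ m ≤ n, 0 ≤ Gs [(O, m)]

theorem NonnegBelow.heaps {hs : List (Octal × ℕ)} {O : Octal} {n k : ℕ} {ns : List ℕ}
    (h : NonnegBelow Gs hs) (hmem : (O, n) ∈ hs) (hm : O.HeapMove n k ns) :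
    NonnegBelow Gs (ns.map (O, ·)) := by
  intro O' l hmem' m hm'
  obtain ⟨l, hl, ⟨⟩⟩ := List.mem_map.mp hmem'
  exact h O n hmem m (hm'.trans (hm.le_of_mem hl))

theorem SubMove.nonnegBelow {hs hs' : List (Octal × ℕ)} {pts : ℝ} {b : Bool}
    (h : SubMove hs pts hs' b) (hnn : NonnegBelow Gs hs) : NonnegBelow Gs hs' := by
  induction h with
  | nil => exact hnn
  | skip _ ih =>
    intro O n hmem
    rcases List.mem_cons.mp hmem with heq | hmem
    · exact hnn O n (heq ▸ List.mem_cons_self)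
    · exact ih (fun O n h => hnn O n (List.mem_cons_of_mem _ h)) O n hmem
  | move hm _ ih =>
    intro O n hmem
    rcases List.mem_append.mp hmem with hmem | hmem
    · exact hnn.heaps List.mem_cons_self hm O n hmem
    · exact ih (fun O n h => hnn O n (List.mem_cons_of_mem _ h)) O n hmem

theorem SubMove.sub_heapSum_le {hs hs' : List (Octal × ℕ)} {pts : ℝ} {b : Bool}
    (h : SubMove hs pts hs' b) (hnn : ∀ q ∈ hs, 0 ≤ Gs [q])
    (hopt : ∀ O n k ns, (O, n) ∈ hs → O.HeapMove n k ns →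
      O.p k - heapSum Gs (ns.map (O, ·)) ≤ Gs [(O, n)]) :
    pts - heapSum Gs hs' ≤ heapSum Gs hs := by
  induction h with
  | nil => simp
  | @skip O n _ _ _ _ _ ih =>
    have hq := hnn _ List.mem_cons_self
    have := ih (fun q hq => hnn q (List.mem_cons_of_mem _ hq))
      (fun O n k ns hmem => hopt O n k ns (List.mem_cons_of_mem _ hmem))
    simp only [heapSum_cons]
    linarith
  | @move O n k ns _ _ _ _ hm _ ih =>
    have hq := hopt O n k ns List.mem_cons_self hm
    have := ih (fun q hq => hnn q (List.mem_cons_of_mem _ hq))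
      (fun O n k ns hmem => hopt O n k ns (List.mem_cons_of_mem _ hmem))
    simp only [heapSum_cons, heapSum_append]
    linarith

theorem exists_subMove_sub_heapSum_eq (hs : List (Octal × ℕ))
    (hdead : ∀ O n, (O, n) ∈ hs → ¬ O.CanMove n → Gs [(O, n)] = 0)
    (hopt : ∀ O n, (O, n) ∈ hs → O.CanMove n →
      ∃ k ns, O.HeapMove n k ns ∧ Gs [(O, n)] = O.p k - heapSum Gs (ns.map (O, ·))) :
    ∃ pts hs' b, SubMove hs pts hs' b ∧ pts - heapSum Gs hs' = heapSum Gs hs ∧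
      ((∃ q ∈ hs, q.1.CanMove q.2) → b = true) := by
  induction hs with
  | nil => exact ⟨0, [], false, SubMove.nil, by simp, by simp⟩
  | cons q hs ih =>
    obtain ⟨O, n⟩ := q
    obtain ⟨pts, hs', b, hsub, heq, hb⟩ :=
      ih (fun O n hmem => hdead O n (List.mem_cons_of_mem _ hmem))
        (fun O n hmem => hopt O n (List.mem_cons_of_mem _ hmem))
    by_cases hmove : O.CanMove n
    · obtain ⟨k, ns, hm, hval⟩ := hopt O n List.mem_cons_self hmove
      refine ⟨_, _, true, SubMove.move hm hsub, ?_, fun _ => rfl⟩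
      simp only [heapSum_cons, heapSum_append]
      linarith
    · refine ⟨pts, _, b, SubMove.skip hsub, ?_, ?_⟩
      · simp only [heapSum_cons, hdead O n List.mem_cons_self hmove]
        linarith
      · rintro ⟨q, hq, hqmove⟩
        rcases List.mem_cons.mp hq with rfl | hq
        · exact absurd hqmove hmove
        · exact hb ⟨q, hq, hqmove⟩

end Values

structure IsSelGrundy (Gs : List (Octal × ℕ) → ℝ) : Prop where
  eq_zero : ∀ hs, (¬ ∃ pts hs', SelMove hs pts hs') → Gs hs = 0
  isGreatest : ∀ hs, (∃ pts hs', SelMove hs pts hs') →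
    IsGreatest {x : ℝ | ∃ pts hs', SelMove hs pts hs' ∧ x = pts - Gs hs'} (Gs hs)

namespace IsSelGrundy

variable {Gs : List (Octal × ℕ) → ℝ} {O : Octal} {n : ℕ}

theorem singleton_eq_zero (hG : IsSelGrundy Gs) (h : ¬ O.CanMove n) : Gs [(O, n)] = 0 :=
  hG.eq_zero _ (by simpa [exists_selMove_iff] using h)

theorem sub_le_singleton (hG : IsSelGrundy Gs) {k : ℕ} {ns : List ℕ} (hm : O.HeapMove n k ns) :
    O.p k - Gs (ns.map (O, ·)) ≤ Gs [(O, n)] := by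
  have hsel : SelMove [(O, n)] (O.p k) (ns.map (O, ·)) :=
    selMove_singleton_iff.mpr ⟨k, ns, hm, rfl, rfl⟩
  exact (hG.isGreatest _ ⟨_, _, hsel⟩).2 ⟨_, _, hsel, rfl⟩

theorem exists_singleton_eq (hG : IsSelGrundy Gs) (h : O.CanMove n) :
    ∃ k ns, O.HeapMove n k ns ∧ Gs [(O, n)] = O.p k - Gs (ns.map (O, ·)) := by
  have hmov : ∃ pts hs', SelMove [(O, n)] pts hs' := by
    simpa [exists_selMove_iff] using h
  obtain ⟨_, _, hsel, hval⟩ := (hG.isGreatest _ hmov).1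
  obtain ⟨k, ns, hm, rfl, rfl⟩ := selMove_singleton_iff.mp hsel
  exact ⟨k, ns, hm, hval⟩

theorem eq_heapSum (hG : IsSelGrundy Gs) (hs : List (Octal × ℕ)) (hnn : NonnegBelow Gs hs) :
    Gs hs = heapSum Gs hs := by
  by_cases hmov : ∃ pts hs', SelMove hs pts hs'
  swap
  · rw [hG.eq_zero hs hmov, heapSum, List.sum_eq_zero]
    simp only [List.mem_map]
    rintro _ ⟨⟨O, n⟩, hmem, rfl⟩
    exact hG.singleton_eq_zero fun hmove => hmov (exists_selMove_iff.mpr ⟨_, hmem, hmove⟩)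
  have hsel_eq : ∀ pts hs', SelMove hs pts hs' → Gs hs' = heapSum Gs hs' :=
    fun _ hs' hsel => hG.eq_heapSum hs' (hsel.nonnegBelow hnn)
  have hheap_eq : ∀ O n k ns, (O, n) ∈ hs → O.HeapMove n k ns →
      Gs (ns.map (O, ·)) = heapSum Gs (ns.map (O, ·)) :=
    fun _ _ _ ns hmem hm => hG.eq_heapSum (ns.map _) (hnn.heaps hmem hm)
  apply le_antisymm
  · obtain ⟨pts, hs', hsel, hval⟩ := (hG.isGreatest hs hmov).1
    rw [hval, hsel_eq _ _ hsel]
    refine SubMove.sub_heapSum_le hsel (fun q hq => hnn q.1 q.2 hq q.2 le_rfl) ?_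
    intro O n k ns hmem hm
    rw [← hheap_eq O n k ns hmem hm]
    exact hG.sub_le_singleton hm
  · obtain ⟨pts, hs', b, hsub, heq, hb⟩ := exists_subMove_sub_heapSum_eq hs
      (fun _ _ _ => hG.singleton_eq_zero) (fun O n hmem hmove => by
        obtain ⟨k, ns, hm, hval⟩ := hG.exists_singleton_eq hmove
        exact ⟨k, ns, hm, hheap_eq O n k ns hmem hm ▸ hval⟩)
    obtain rfl := hb (exists_selMove_iff.mp hmov)
    exact (hG.isGreatest hs hmov).2 ⟨pts, hs', hsub, by rw [hsel_eq _ _ hsub, heq]⟩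
termination_by beans hs
decreasing_by
  · exact hsel.beans_lt
  · exact (beans_map_mk _ _).trans_lt (hm.sum_lt.trans_le (le_beans_of_mem hmem))

end IsSelGrundy

theorem sel_grundy_additive_of_nonneg_general (Gs : List (Octal × ℕ) → ℝ)
    (hdead : ∀ hs : List (Octal × ℕ), (¬ ∃ pts hs', SelMove hs pts hs') → Gs hs = 0)
    (hrec : ∀ hs : List (Octal × ℕ), (∃ pts hs', SelMove hs pts hs') →
      IsGreatest {x : ℝ | ∃ pts hs', SelMove hs pts hs' ∧ x = pts - Gs hs'} (Gs hs))
    (v : ℕ) (O : Fin v → Octal) (N : Fin v → ℕ)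
    (hnn : ∀ i : Fin v, ∀ n : ℕ, n ≤ N i → 0 ≤ Gs [(O i, n)])
    (heap : Fin v → ℕ) (hle : ∀ i, heap i ≤ N i) :
    Gs (List.ofFn fun i => (O i, heap i)) = ∑ i : Fin v, Gs [(O i, heap i)] := by
  have hG : IsSelGrundy Gs := ⟨hdead, hrec⟩
  have hbelow : NonnegBelow Gs (List.ofFn fun i => (O i, heap i)) := by
    intro O' n hmem m hm
    obtain ⟨i, hi⟩ := List.mem_ofFn.mp hmem
    obtain ⟨rfl, rfl⟩ := Prod.mk.inj hi
    exact hnn i m (hm.trans (hle i))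
  rw [hG.eq_heapSum _ hbelow, heapSum, List.map_ofFn, List.sum_ofFn]
  rfl

/-- If the single-heap selective-sum scoring Grundy values of heaps `n ≤ N i` in the
octal games `O i` are all nonnegative, then the selective-sum Grundy value of such
heaps joined selectively is the sum of the single-heap values. -/
theorem sel_grundy_additive_of_nonneg (Gs : List (Octal × ℕ) → ℝ)
    (h0 : Gs [] = 0)
    (hdead : ∀ hs : List (Octal × ℕ), (¬ ∃ pts hs', SelMove hs pts hs') → Gs hs = 0)
    (hrec : ∀ hs : List (Octal × ℕ), (∃ pts hs', SelMove hs pts hs') →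
      IsGreatest {x : ℝ | ∃ pts hs', SelMove hs pts hs' ∧ x = pts - Gs hs'} (Gs hs))
    (v : ℕ) (O : Fin v → Octal) (N : Fin v → ℕ)
    (hnn : ∀ i : Fin v, ∀ n : ℕ, n ≤ N i → 0 ≤ Gs [(O i, n)])
    (heap : Fin v → ℕ) (hle : ∀ i, heap i ≤ N i) :
    Gs (List.ofFn fun i => (O i, heap i)) = ∑ i : Fin v, Gs [(O i, heap i)] :=
  sel_grundy_additive_of_nonneg_general Gs hdead hrec v O N hnn heap hle
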